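/- arXiv:math/0202021 — 5 statements merged into one kernel-verified Lean document; each statement's English description precedes it below -/
import Mathlib

section
/- Let H: Ω¹ → χ be a skew-symmetric linear map in a Gelfand–Dorfman complex. Then for all f, g, h ∈ Ω⁰, [H,H](df, dg, dh) = 2·∑_{cyclic(f,g,h)} {{f,g},h}, where {f,g} := i(H(df))(dg) and [H,H](α,β,γ) := ∑_{cyclic(α,β,γ)} 2<H L_{Hα}β, γ>. -/
/-- A Gelfand–Dorfman complex: a real Lie algebra `χ`, a cochain complex
`(Ω k, d)` of real vector spaces with `d ∘ d = 0`, and contraction operators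
`ι X : Ω (k+1) →ₗ[ℝ] Ω k` (so that `Ω (-1) = 0` is implicit), with the Lie
derivative `L X = d ∘ ι X + ι X ∘ d`, satisfying the Gelfand–Dorfman axioms. -/
theorem gd_bracket_on_exact_forms
    (χ : Type) [LieRing χ] [LieAlgebra ℝ χ]
    (Ω : ℕ → Type) [∀ k, AddCommGroup (Ω k)] [∀ k, Module ℝ (Ω k)]
    (d : ∀ k, Ω k →ₗ[ℝ] Ω (k + 1))
    (hd2 : ∀ (k) (ω : Ω k), d (k + 1) (d k ω) = 0)
    (ι : χ → ∀ k, Ω (k + 1) →ₗ[ℝ] Ω k)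
    (hnd : ∀ α : Ω 1, (∀ X : χ, ι X 0 α = 0) → α = 0)
    (L : χ → ∀ k, Ω k →ₗ[ℝ] Ω k)
    (hL0 : ∀ (X : χ) (f : Ω 0), L X 0 f = ι X 0 (d 0 f))
    (hLs : ∀ (X : χ) (k) (ω : Ω (k + 1)),
      L X (k + 1) ω = d k (ι X k ω) + ι X (k + 1) (d (k + 1) ω))
    (hanti : ∀ (X Y : χ) (k) (ω : Ω (k + 2)),
      ι X k (ι Y (k + 1) ω) + ι Y k (ι X (k + 1) ω) = 0)
    (hbr : ∀ (X Y : χ) (k) (ω : Ω (k + 1)),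
      ι ⁅X, Y⁆ k ω = L X k (ι Y k ω) - ι Y k (L X (k + 1) ω))
    (H : Ω 1 →ₗ[ℝ] χ)
    (hskew : ∀ α β : Ω 1, ι (H β) 0 α = - ι (H α) 0 β) :
    ∀ f g h : Ω 0,
      ((2 : ℝ) • (ι (H (L (H (d 0 f)) 1 (d 0 g))) 0 (d 0 h) + ι (H (L (H (d 0 g)) 1 (d 0 h))) 0 (d 0 f) + ι (H (L (H (d 0 h)) 1 (d 0 f))) 0 (d 0 g))) =
        (2 : ℝ) • (ι (H (d 0 (ι (H (d 0 (f))) 0 (d 0 (g))))) 0 (d 0 h)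
          + ι (H (d 0 (ι (H (d 0 (g))) 0 (d 0 (h))))) 0 (d 0 f)
          + ι (H (d 0 (ι (H (d 0 (h))) 0 (d 0 (f))))) 0 (d 0 g)) := by
  intro f g h
  have key : ∀ u v : Ω 0, L (H (d 0 u)) 1 (d 0 v) = d 0 (ι (H (d 0 u)) 0 (d 0 v)) := by
    intro u v
    rw [hLs, hd2, map_zero, add_zero]
  rw [key f g, key g h, key h f]
end

section
/- If H is a hamiltonian structure on a Gelfand–Dorfman complex (i.e. H: Ω¹ → χ is skew-symmetric and [H,H] = 0), then the Poisson bracket {f,g} := i(H(df))(dg) on Ω⁰ satisfies the Jacobi identity: {{f,g},h} + {{g,h},f} + {{h,f},g} = 0 for all f, g, h ∈ Ω⁰. -/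
/-- A Gelfand–Dorfman complex: a real Lie algebra `χ`, a cochain complex
`(Ω k, d)` of real vector spaces with `d ∘ d = 0`, and contraction operators
`ι X : Ω (k+1) →ₗ[ℝ] Ω k` (so that `Ω (-1) = 0` is implicit), with the Lie
derivative `L X = d ∘ ι X + ι X ∘ d`, satisfying the Gelfand–Dorfman axioms. -/
theorem gd_hamiltonian_jacobi
    (χ : Type) [LieRing χ] [LieAlgebra ℝ χ]
    (Ω : ℕ → Type) [∀ k, AddCommGroup (Ω k)] [∀ k, Module ℝ (Ω k)]
    (d : ∀ k, Ω k →ₗ[ℝ] Ω (k + 1))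
    (hd2 : ∀ (k) (ω : Ω k), d (k + 1) (d k ω) = 0)
    (ι : χ → ∀ k, Ω (k + 1) →ₗ[ℝ] Ω k)
    (hnd : ∀ α : Ω 1, (∀ X : χ, ι X 0 α = 0) → α = 0)
    (L : χ → ∀ k, Ω k →ₗ[ℝ] Ω k)
    (hL0 : ∀ (X : χ) (f : Ω 0), L X 0 f = ι X 0 (d 0 f))
    (hLs : ∀ (X : χ) (k) (ω : Ω (k + 1)),
      L X (k + 1) ω = d k (ι X k ω) + ι X (k + 1) (d (k + 1) ω))
    (hanti : ∀ (X Y : χ) (k) (ω : Ω (k + 2)),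
      ι X k (ι Y (k + 1) ω) + ι Y k (ι X (k + 1) ω) = 0)
    (hbr : ∀ (X Y : χ) (k) (ω : Ω (k + 1)),
      ι ⁅X, Y⁆ k ω = L X k (ι Y k ω) - ι Y k (L X (k + 1) ω))
    (H : Ω 1 →ₗ[ℝ] χ)
    (hskew : ∀ α β : Ω 1, ι (H β) 0 α = - ι (H α) 0 β)
    (hHam : ∀ α β γ : Ω 1, ((2 : ℝ) • (ι (H (L (H (α)) 1 (β))) 0 (γ) + ι (H (L (H (β)) 1 (γ))) 0 (α) + ι (H (L (H (γ)) 1 (α))) 0 (β))) = 0) :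
    ∀ f g h : Ω 0,
      ι (H (d 0 (ι (H (d 0 (f))) 0 (d 0 (g))))) 0 (d 0 h)
        + ι (H (d 0 (ι (H (d 0 (g))) 0 (d 0 (h))))) 0 (d 0 f)
        + ι (H (d 0 (ι (H (d 0 (h))) 0 (d 0 (f))))) 0 (d 0 g) = 0 := by
  intro f g h
  have key : ∀ (X : χ) (u : Ω 0), d 0 (ι X 0 (d 0 u)) = L X 1 (d 0 u) := by
    intro X u
    rw [hLs X 0 (d 0 u), hd2]
    simp
  rw [key, key, key]
  have hx := hHam (d 0 f) (d 0 g) (d 0 h)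
  have h2 := congrArg (fun z => ((2 : ℝ)⁻¹) • z) hx
  simpa [smul_smul] using h2
end

section
/- Let H: Ω¹ → χ be a skew-symmetric linear map in a Gelfand–Dorfman complex. Then the fundamental identity holds: for all α, β, γ ∈ Ω¹, <γ, H{α,β}> = <γ, [Hα, Hβ]> + (1/2)[H,H](α,β,γ), where {α,β} := L_{Hα}β − L_{Hβ}α − d<Hα,β>. -/
/-- A Gelfand–Dorfman complex: a real Lie algebra `χ`, a cochain complex
`(Ω k, d)` of real vector spaces with `d ∘ d = 0`, and contraction operators
`ι X : Ω (k+1) →ₗ[ℝ] Ω k` (so that `Ω (-1) = 0` is implicit), with the Lie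
derivative `L X = d ∘ ι X + ι X ∘ d`, satisfying the Gelfand–Dorfman axioms. -/
theorem gd_fundamental_identity
    (χ : Type) [LieRing χ] [LieAlgebra ℝ χ]
    (Ω : ℕ → Type) [∀ k, AddCommGroup (Ω k)] [∀ k, Module ℝ (Ω k)]
    (d : ∀ k, Ω k →ₗ[ℝ] Ω (k + 1))
    (hd2 : ∀ (k) (ω : Ω k), d (k + 1) (d k ω) = 0)
    (ι : χ → ∀ k, Ω (k + 1) →ₗ[ℝ] Ω k)
    (hnd : ∀ α : Ω 1, (∀ X : χ, ι X 0 α = 0) → α = 0)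
    (L : χ → ∀ k, Ω k →ₗ[ℝ] Ω k)
    (hL0 : ∀ (X : χ) (f : Ω 0), L X 0 f = ι X 0 (d 0 f))
    (hLs : ∀ (X : χ) (k) (ω : Ω (k + 1)),
      L X (k + 1) ω = d k (ι X k ω) + ι X (k + 1) (d (k + 1) ω))
    (hanti : ∀ (X Y : χ) (k) (ω : Ω (k + 2)),
      ι X k (ι Y (k + 1) ω) + ι Y k (ι X (k + 1) ω) = 0)
    (hbr : ∀ (X Y : χ) (k) (ω : Ω (k + 1)),
      ι ⁅X, Y⁆ k ω = L X k (ι Y k ω) - ι Y k (L X (k + 1) ω))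
    (H : Ω 1 →ₗ[ℝ] χ)
    (hskew : ∀ α β : Ω 1, ι (H β) 0 α = - ι (H α) 0 β) :
    ∀ α β γ : Ω 1,
      ι (H (L (H (α)) 1 (β) - L (H (β)) 1 (α) - d 0 (ι (H (α)) 0 (β)))) 0 γ =
        ι ⁅H α, H β⁆ 0 γ + ((1 : ℝ) / 2) • ((2 : ℝ) • (ι (H (L (H (α)) 1 (β))) 0 (γ) + ι (H (L (H (β)) 1 (γ))) 0 (α) + ι (H (L (H (γ)) 1 (α))) 0 (β))) := by
  intro α β γ
  -- abbreviations
  -- scalar cleanup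
  rw [smul_smul, show (1:ℝ)/2*2 = 1 by norm_num, one_smul]
  -- turn LHS pairing around with skewness
  rw [hskew γ (L (H α) 1 β - L (H β) 1 α - d 0 (ι (H α) 0 β))]
  -- skew-symmetry for the cyclic terms
  rw [hskew γ (L (H α) 1 β), hskew α (L (H β) 1 γ), hskew β (L (H γ) 1 α)]
  -- expand bracket contraction
  rw [hbr (H α) (H β) 0 γ]
  -- expand Lie derivatives
  rw [hLs (H α) 0 β, hLs (H β) 0 α, hLs (H α) 0 γ, hLs (H β) 0 γ, hLs (H γ) 0 α, hL0]
  -- anticommutation of contractions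
  have ha := fun (X Y : χ) (ω : Ω 2) => eq_neg_of_add_eq_zero_left (hanti X Y 0 ω)
  simp only [map_add, map_sub, map_neg]
  rw [ha (H γ) (H α) (d 1 β), ha (H γ) (H β) (d 1 α), ha (H β) (H α) (d 1 γ),
      ha (H α) (H β) (d 1 γ), ha (H β) (H γ) (d 1 α)]
  -- skewness of scalar functions
  have hs1 : ι (H β) 0 α = - ι (H α) 0 β := hskew α β
  have hs2 : ι (H α) 0 γ = - ι (H γ) 0 α := hskew γ α
  rw [hs1, hs2]
  simp only [map_add, map_sub, map_neg]
  abel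
end

section
/- Let H: Ω¹ → χ be a skew-symmetric linear map in a Gelfand–Dorfman complex satisfying H{α,β} = [Hα, Hβ] for all α, β ∈ Ω¹ (where {α,β} := L_{Hα}β − L_{Hβ}α − d<Hα,β>). Then [H,H] = 0, i.e. H is a hamiltonian structure. -/
private lemma gd_abel_aux {M : Type*} [AddCommGroup M] (a b c e f g p q : M)
    (hK : -p + f + g = q - a - b) (he : e + p = 0) (hc : c = -q) :
    (-a - b) + (-c - e) + (-f - g) = 0 := by
  have hfg : f + g = q - a - b + p := by rw [← hK]; abel
  have h2 : (-a - b) + (-c - e) + (-f - g) = -a - b - c - e - (f + g) := by abel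
  rw [h2, hfg, hc]
  have h3 : -a - b - -q - e - (q - a - b + p) = -(e + p) := by abel
  rw [h3, he, neg_zero]

/-- A Gelfand–Dorfman complex: a real Lie algebra `χ`, a cochain complex
`(Ω k, d)` of real vector spaces with `d ∘ d = 0`, and contraction operators
`ι X : Ω (k+1) →ₗ[ℝ] Ω k` (so that `Ω (-1) = 0` is implicit), with the Lie
derivative `L X = d ∘ ι X + ι X ∘ d`, satisfying the Gelfand–Dorfman axioms. -/
theorem gd_hom_implies_hamiltonian
    (χ : Type) [LieRing χ] [LieAlgebra ℝ χ]
    (Ω : ℕ → Type) [∀ k, AddCommGroup (Ω k)] [∀ k, Module ℝ (Ω k)]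
    (d : ∀ k, Ω k →ₗ[ℝ] Ω (k + 1))
    (hd2 : ∀ (k) (ω : Ω k), d (k + 1) (d k ω) = 0)
    (ι : χ → ∀ k, Ω (k + 1) →ₗ[ℝ] Ω k)
    (hnd : ∀ α : Ω 1, (∀ X : χ, ι X 0 α = 0) → α = 0)
    (L : χ → ∀ k, Ω k →ₗ[ℝ] Ω k)
    (hL0 : ∀ (X : χ) (f : Ω 0), L X 0 f = ι X 0 (d 0 f))
    (hLs : ∀ (X : χ) (k) (ω : Ω (k + 1)),
      L X (k + 1) ω = d k (ι X k ω) + ι X (k + 1) (d (k + 1) ω))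
    (hanti : ∀ (X Y : χ) (k) (ω : Ω (k + 2)),
      ι X k (ι Y (k + 1) ω) + ι Y k (ι X (k + 1) ω) = 0)
    (hbr : ∀ (X Y : χ) (k) (ω : Ω (k + 1)),
      ι ⁅X, Y⁆ k ω = L X k (ι Y k ω) - ι Y k (L X (k + 1) ω))
    (H : Ω 1 →ₗ[ℝ] χ)
    (hskew : ∀ α β : Ω 1, ι (H β) 0 α = - ι (H α) 0 β)
    (hHom : ∀ α β : Ω 1, H (L (H (α)) 1 (β) - L (H (β)) 1 (α) - d 0 (ι (H (α)) 0 (β))) = ⁅H α, H β⁆) :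
    ∀ α β γ : Ω 1, ((2 : ℝ) • (ι (H (L (H (α)) 1 (β))) 0 (γ) + ι (H (L (H (β)) 1 (γ))) 0 (α) + ι (H (L (H (γ)) 1 (α))) 0 (β))) = 0 := by
  intro α β γ
  -- atoms
  set a := ι (H γ) 0 (d 0 (ι (H α) 0 β)) with ha
  set b := ι (H γ) 0 (ι (H α) 1 (d 1 β)) with hb
  set c := ι (H α) 0 (d 0 (ι (H β) 0 γ)) with hc
  set e := ι (H α) 0 (ι (H β) 1 (d 1 γ)) with he
  set f := ι (H β) 0 (d 0 (ι (H γ) 0 α)) with hf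
  set g := ι (H β) 0 (ι (H γ) 1 (d 1 α)) with hg
  set p := ι (H β) 0 (ι (H α) 1 (d 1 γ)) with hp
  set q := ι (H α) 0 (d 0 (ι (H γ) 0 β)) with hq
  have hT1 : ι (H (L (H α) 1 β)) 0 γ = -a - b := by
    rw [hskew γ (L (H α) 1 β), hLs (H α) 0 β, map_add]; abel
  have hT2 : ι (H (L (H β) 1 γ)) 0 α = -c - e := by
    rw [hskew α (L (H β) 1 γ), hLs (H β) 0 γ, map_add]; abel
  have hT3 : ι (H (L (H γ) 1 α)) 0 β = -f - g := by
    rw [hskew β (L (H γ) 1 α), hLs (H γ) 0 α, map_add]; abel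
  have hK : -p + f + g = q - a - b := by
    have E1 := hbr (H α) (H γ) 0 β
    have E2 : ι ⁅H α, H γ⁆ 0 β
        = -(ι (H β) 0 (L (H α) 1 γ - L (H γ) 1 α - d 0 (ι (H α) 0 γ))) := by
      rw [← hHom α γ]; exact hskew β _
    rw [E2, hL0 (H α) (ι (H γ) 0 β), hLs (H α) 0 β, hLs (H α) 0 γ, hLs (H γ) 0 α,
      map_sub, map_sub, map_add, map_add, map_add] at E1
    rw [← hq, ← ha, ← hb, ← hf, ← hg, ← hp] at E1
    -- E1 : -(r + p - (f + g) - r) = q - (a + b) where r cancels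
    linear_combination (norm := abel) E1
  have hcq : c = -q := by
    rw [hc, hq, hskew γ β, map_neg, map_neg]
  have hep : e + p = 0 := by
    rw [he, hp]; exact hanti (H α) (H β) 0 (d 1 γ)
  rw [hT1, hT2, hT3, gd_abel_aux a b c e f g p q hK hep hcq, smul_zero]
end

section
/- Let H: Ω¹ → χ be a skew-symmetric linear map in a Gelfand–Dorfman complex. Then the Gelfand–Dorfman bracket [H,H](α,β,γ) = ∑_{cyclic(α,β,γ)} 2<H L_{Hα}β, γ> is totally antisymmetric in its three arguments α, β, γ ∈ Ω¹. -/
/-- A Gelfand–Dorfman complex: a real Lie algebra `χ`, a cochain complex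
`(Ω k, d)` of real vector spaces with `d ∘ d = 0`, and contraction operators
`ι X : Ω (k+1) →ₗ[ℝ] Ω k` (so that `Ω (-1) = 0` is implicit), with the Lie
derivative `L X = d ∘ ι X + ι X ∘ d`, satisfying the Gelfand–Dorfman axioms. -/
theorem gd_bracket_totally_antisymmetric
    (χ : Type) [LieRing χ] [LieAlgebra ℝ χ]
    (Ω : ℕ → Type) [∀ k, AddCommGroup (Ω k)] [∀ k, Module ℝ (Ω k)]
    (d : ∀ k, Ω k →ₗ[ℝ] Ω (k + 1))
    (hd2 : ∀ (k) (ω : Ω k), d (k + 1) (d k ω) = 0)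
    (ι : χ → ∀ k, Ω (k + 1) →ₗ[ℝ] Ω k)
    (hnd : ∀ α : Ω 1, (∀ X : χ, ι X 0 α = 0) → α = 0)
    (L : χ → ∀ k, Ω k →ₗ[ℝ] Ω k)
    (hL0 : ∀ (X : χ) (f : Ω 0), L X 0 f = ι X 0 (d 0 f))
    (hLs : ∀ (X : χ) (k) (ω : Ω (k + 1)),
      L X (k + 1) ω = d k (ι X k ω) + ι X (k + 1) (d (k + 1) ω))
    (hanti : ∀ (X Y : χ) (k) (ω : Ω (k + 2)),
      ι X k (ι Y (k + 1) ω) + ι Y k (ι X (k + 1) ω) = 0)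
    (hbr : ∀ (X Y : χ) (k) (ω : Ω (k + 1)),
      ι ⁅X, Y⁆ k ω = L X k (ι Y k ω) - ι Y k (L X (k + 1) ω))
    (H : Ω 1 →ₗ[ℝ] χ)
    (hskew : ∀ α β : Ω 1, ι (H β) 0 α = - ι (H α) 0 β) :
    ∀ α β γ : Ω 1,
      ((2 : ℝ) • (ι (H (L (H (β)) 1 (α))) 0 (γ) + ι (H (L (H (α)) 1 (γ))) 0 (β) + ι (H (L (H (γ)) 1 (β))) 0 (α))) = - ((2 : ℝ) • (ι (H (L (H (α)) 1 (β))) 0 (γ) + ι (H (L (H (β)) 1 (γ))) 0 (α) + ι (H (L (H (γ)) 1 (α))) 0 (β))) ∧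
      ((2 : ℝ) • (ι (H (L (H (α)) 1 (γ))) 0 (β) + ι (H (L (H (γ)) 1 (β))) 0 (α) + ι (H (L (H (β)) 1 (α))) 0 (γ))) = - ((2 : ℝ) • (ι (H (L (H (α)) 1 (β))) 0 (γ) + ι (H (L (H (β)) 1 (γ))) 0 (α) + ι (H (L (H (γ)) 1 (α))) 0 (β))) := by

  intro α β γ
  -- key expansion of each term via skewness and Cartan's formula
  have key : ∀ a b c : Ω 1,
      ι (H (L (H a) 1 b)) 0 c
        = - (L (H c) 0 (ι (H a) 0 b) + ι (H c) 0 (ι (H a) 1 (d 1 b))) := by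
    intro a b c
    rw [hskew c (L (H a) 1 b), hLs (H a) 0 b, map_add, hL0]
  -- double contractions anticommute
  have hdbl : ∀ a b c : Ω 1,
      ι (H c) 0 (ι (H a) 1 (d 1 b)) = - ι (H a) 0 (ι (H c) 1 (d 1 b)) := by
    intro a b c
    exact eq_neg_of_add_eq_zero_left (hanti (H c) (H a) 0 (d 1 b))
  -- sum with swapped arguments vanishes
  have hsum : (ι (H (L (H β) 1 α)) 0 γ + ι (H (L (H α) 1 γ)) 0 β + ι (H (L (H γ) 1 β)) 0 α)
      = - (ι (H (L (H α) 1 β)) 0 γ + ι (H (L (H β) 1 γ)) 0 α + ι (H (L (H γ) 1 α)) 0 β) := by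
    rw [key β α γ, key α γ β, key γ β α, key α β γ, key β γ α, key γ α β,
        hskew β α, hskew γ β, hskew α γ,
        hdbl β α γ, hdbl α γ β, hdbl γ β α]
    simp only [map_neg]
    abel
  constructor
  · rw [hsum, smul_neg]
  · rw [show (ι (H (L (H α) 1 γ)) 0 β + ι (H (L (H γ) 1 β)) 0 α + ι (H (L (H β) 1 α)) 0 γ)
        = (ι (H (L (H β) 1 α)) 0 γ + ι (H (L (H α) 1 γ)) 0 β + ι (H (L (H γ) 1 β)) 0 α) by abel,
      hsum, smul_neg]
end
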